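/- Let a > 0 be real, p ≥ 1 an integer, and c, M real numbers with 0 ≤ M < c. Then ∫_0^∞ v^{a−1} e^{−cv} ₁F₁(p, a; Mv) dv = Γ(a) c^{p−a} (c−M)^{−p}. -/

import Mathlib

open Real MeasureTheory

/-- Pochhammer symbol `(a)_m = a(a+1)⋯(a+m-1)`. -/
noncomputable def poch (a : ℝ) (m : ℕ) : ℝ := (ascPochhammer ℝ m).eval a

/-- Confluent hypergeometric function `₁F₁(a, c; z)`. -/
noncomputable def oneF1 (a c z : ℝ) : ℝ :=
  ∑' m : ℕ, poch a m / poch c m * z ^ m / (Nat.factorial m)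

/-- Gegenbauer (ultraspherical) polynomial `C_j^{(k)}(x)`. -/
noncomputable def geg (j : ℕ) (k x : ℝ) : ℝ :=
  ∑ l ∈ Finset.range (j / 2 + 1),
    (-1 : ℝ) ^ l * poch k (j - l) / ((Nat.factorial l : ℝ) * (Nat.factorial (j - 2 * l))) *
      (2 * x) ^ (j - 2 * l)

/-- Integral over the standard simplex `Σ_p` in the coordinates `(u_1, …, u_{p-1})`,
with `u_p := 1 - u_1 - ⋯ - u_{p-1}`. -/
noncomputable def simplexIntegral (p : ℕ) (f : (Fin p → ℝ) → ℝ) : ℝ :=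
  ∫ u in {u : Fin (p - 1) → ℝ | (∀ s, 0 ≤ u s) ∧ ∑ s, u s ≤ 1},
    f (fun i => if h : (i : ℕ) < p - 1 then u ⟨i, h⟩ else 1 - ∑ s, u s)

/-!
Expand `₁F₁(p, a; Mv)` termwise. The `m`-th term integrates against `v^(a-1) e^(-cv)` to
`(p)_m / ((a)_m m!) · M^m · Γ(a+m) / c^(a+m)`, and `Γ(a+m) = (a)_m Γ(a)` cancels the `(a)_m`,
leaving `Γ(a) c^(-a)` times the binomial series `∑ (p)_m / m! · (M/c)^m = (1 - M/c)^(-p)`.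
For `p ≥ 0` and `M ≥ 0` all terms are nonnegative, so summability of these integrals justifies
exchanging sum and integral.
-/

open Set

lemma poch_succ (a : ℝ) (m : ℕ) : poch a (m + 1) = poch a m * (a + m) := by
  simp [poch, ascPochhammer_succ_right]

lemma poch_nonneg {a : ℝ} (ha : 0 ≤ a) (m : ℕ) : 0 ≤ poch a m := by
  induction m with
  | zero => simp [poch]
  | succ m ih => rw [poch_succ]; positivity

lemma poch_pos {a : ℝ} (ha : 0 < a) (m : ℕ) : 0 < poch a m := by
  induction m with
  | zero => simp [poch]
  | succ m ih => rw [poch_succ]; positivity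

lemma Gamma_add_natCast_eq_poch_mul {a : ℝ} (ha : 0 < a) (m : ℕ) :
    Gamma (a + m) = poch a m * Gamma a := by
  induction m with
  | zero => simp [poch]
  | succ m ih =>
    rw [Nat.cast_succ, ← add_assoc, Gamma_add_one (by positivity), ih, poch_succ]
    ring

lemma choose_add_sub_one_eq_poch_div_factorial (p : ℝ) (m : ℕ) :
    Ring.choose (p + m - 1) m = poch p m / m.factorial := by
  rw [Ring.choose_eq_smul, Polynomial.descPochhammer_smeval_eq_ascPochhammer,
    Polynomial.ascPochhammer_smeval_eq_eval, smul_eq_mul, poch, inv_mul_eq_div]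
  ring_nf

lemma hasSum_poch_div_factorial_mul_pow (p : ℝ) {x : ℝ} (hx : |x| < 1) :
    HasSum (fun m : ℕ => poch p m / m.factorial * x ^ m) ((1 - x) ^ (-p)) := by
  have hball : x ∈ Metric.eball (0 : ℝ) 1 := by
    simpa [Metric.mem_eball, edist_dist, Real.dist_eq] using hx
  have h := (one_div_one_sub_rpow_hasFPowerSeriesOnBall_zero p).hasSum hball
  simp only [FormalMultilinearSeries.ofScalars_apply_eq,
    choose_add_sub_one_eq_poch_div_factorial, smul_eq_mul, zero_add] at h
  rwa [rpow_neg (by linarith [le_abs_self x]), ← one_div]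

lemma integral_tsum_of_nonneg_of_hasSum {α ι : Type*} [MeasurableSpace α] {μ : Measure α}
    [Countable ι] {F : ι → α → ℝ} {S : ℝ} (hF_nonneg : ∀ i, 0 ≤ᵐ[μ] F i)
    (hF_int : ∀ i, Integrable (F i) μ) (hS : HasSum (fun i => ∫ a, F i a ∂μ) S) :
    ∫ a, ∑' i, F i a ∂μ = S := by
  have hnorm : ∀ i, ∫ a, ‖F i a‖ ∂μ = ∫ a, F i a ∂μ := fun i =>
    integral_congr_ae <| (hF_nonneg i).mono fun a ha => Real.norm_of_nonneg ha
  have hS_norm : Summable fun i => ∫ a, ‖F i a‖ ∂μ := by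
    simpa only [hnorm] using hS.summable
  exact (hasSum_integral_of_summable_integral_norm hF_int hS_norm).unique hS

lemma Real.rpow_sub_one_mul_pow {v : ℝ} (hv : 0 < v) (a : ℝ) (m : ℕ) :
    v ^ (a - 1) * v ^ m = v ^ (a + m - 1) := by
  rw [← rpow_natCast, ← rpow_add hv]
  ring_nf

lemma integrableOn_rpow_mul_exp_neg_mul_mul_pow {a c : ℝ} (ha : 0 < a) (hc : 0 < c)
    (m : ℕ) :
    IntegrableOn (fun v => v ^ (a - 1) * exp (-c * v) * v ^ m) (Ioi 0) := by
  have h := integrableOn_rpow_mul_exp_neg_mul_rpow (p := 1) (s := a + m - 1) (b := c)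
    (by linarith [(Nat.cast_nonneg m : (0 : ℝ) ≤ m)]) zero_lt_one hc
  refine h.congr_fun (fun v (hv : 0 < v) => ?_) measurableSet_Ioi
  dsimp only
  rw [rpow_one, mul_right_comm, rpow_sub_one_mul_pow hv, neg_mul]

lemma integral_rpow_mul_exp_neg_mul_mul_pow {a c : ℝ} (ha : 0 < a) (hc : 0 < c) (m : ℕ) :
    ∫ v in Ioi 0, v ^ (a - 1) * exp (-c * v) * v ^ m =
      poch a m * Gamma a * (1 / c) ^ (a + m) := by
  rw [← Gamma_add_natCast_eq_poch_mul ha, mul_comm,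
    ← integral_rpow_mul_exp_neg_mul_Ioi (by positivity) hc]
  refine setIntegral_congr_fun measurableSet_Ioi fun v (hv : 0 < v) => ?_
  rw [mul_right_comm, rpow_sub_one_mul_pow hv, neg_mul]

lemma integral_oneF1_term {a c : ℝ} (ha : 0 < a) (hc : 0 < c) (p M : ℝ) (m : ℕ) :
    ∫ v in Ioi 0,
        poch p m / poch a m * M ^ m / m.factorial * (v ^ (a - 1) * exp (-c * v) * v ^ m) =
      Gamma a * (1 / c) ^ a * (poch p m / m.factorial * (M / c) ^ m) := by
  rw [integral_const_mul, integral_rpow_mul_exp_neg_mul_mul_pow ha hc,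
    rpow_add (by positivity), rpow_natCast]
  have := (poch_pos ha m).ne'
  field_simp
  ring

theorem integral_rpow_mul_exp_neg_mul_mul_oneF1 {a p c M : ℝ} (ha : 0 < a) (hp : 0 ≤ p)
    (hM : 0 ≤ M) (hMc : M < c) :
    ∫ v in Ioi 0, v ^ (a - 1) * exp (-c * v) * oneF1 p a (M * v) =
      Gamma a * c ^ (p - a) * (c - M) ^ (-p) := by
  have hc : 0 < c := hM.trans_lt hMc
  have hcM : 0 ≤ c - M := by linarith
  have hx : |M / c| < 1 := by
    rwa [abs_of_nonneg (div_nonneg hM hc.le), div_lt_one hc]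
  set F : ℕ → ℝ → ℝ := fun m v =>
    poch p m / poch a m * M ^ m / m.factorial * (v ^ (a - 1) * exp (-c * v) * v ^ m)
  have hF_sum : ∀ v, v ^ (a - 1) * exp (-c * v) * oneF1 p a (M * v) = ∑' m, F m v := by
    intro v
    rw [oneF1, ← tsum_mul_left]
    congr 1 with m
    ring
  have hF_nonneg : ∀ m, 0 ≤ᵐ[volume.restrict (Ioi 0)] F m := fun m => by
    filter_upwards [ae_restrict_mem measurableSet_Ioi] with v (hv : 0 < v)
    have := poch_nonneg hp m
    have := poch_pos ha m
    positivity
  have hF_int : ∀ m, Integrable (F m) (volume.restrict (Ioi 0)) := fun m =>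
    (integrableOn_rpow_mul_exp_neg_mul_mul_pow ha hc m).const_mul _
  have hS := (hasSum_poch_div_factorial_mul_pow p hx).mul_left (Gamma a * (1 / c) ^ a)
  simp_rw [← integral_oneF1_term ha hc p M] at hS
  rw [funext hF_sum, integral_tsum_of_nonneg_of_hasSum hF_nonneg hF_int hS,
    show 1 - M / c = (c - M) / c by field_simp, div_rpow zero_le_one hc.le, one_rpow,
    div_rpow hcM hc.le, rpow_sub hc, rpow_neg hcM, rpow_neg hc.le]
  field_simp

theorem stmt7_general (a : ℝ) (ha : 0 < a) (p : ℕ) (c M : ℝ) (hM : 0 ≤ M) (hMc : M < c) :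
    ∫ v in Set.Ioi (0 : ℝ), v ^ (a - 1) * Real.exp (-c * v) * oneF1 p a (M * v) =
      Real.Gamma a * c ^ ((p : ℝ) - a) * (c - M) ^ (-(p : ℝ)) :=
  integral_rpow_mul_exp_neg_mul_mul_oneF1 ha p.cast_nonneg hM hMc

theorem stmt7 (a : ℝ) (ha : 0 < a) (p : ℕ) (hp : 1 ≤ p) (c M : ℝ) (hM : 0 ≤ M) (hMc : M < c) :
    ∫ v in Set.Ioi (0 : ℝ), v ^ (a - 1) * Real.exp (-c * v) * oneF1 p a (M * v) =
      Real.Gamma a * c ^ ((p : ℝ) - a) * (c - M) ^ (-(p : ℝ)) :=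
  stmt7_general a ha p c M hM hMc
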